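/- For a weakly acyclic commutative DFA A with at most n states, membership in L(A) depends only on the threshold Parikh image: for words u, v, if min(n−1, |u|_a) = min(n−1, |v|_a) for every letter a, then u ∈ L(A) iff v ∈ L(A). -/
import Mathlib


/-- The action of a complete deterministic semi-automaton, extended to words. -/
def run {Q A : Type*} (δ : Q → A → Q) (q : Q) (w : List A) : Q := w.foldl δ q

section Aux

variable {Q A : Type*} (δ : Q → A → Q)

lemma run_append (q : Q) (u v : List A) :
    run δ q (u ++ v) = run δ (run δ q u) v := List.foldl_append ..

lemma run_perm (hcomm : ∀ (q : Q) (a b : A), δ (δ q a) b = δ (δ q b) a)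
    {u v : List A} (p : u.Perm v) : ∀ q, run δ q u = run δ q v := by
  induction p with
  | nil => intro q; rfl
  | cons a _ ih => intro q; simpa [run] using ih (δ q a)
  | swap a b l => intro q; simp [run, hcomm]
  | trans _ _ ih1 ih2 => intro q; rw [ih1, ih2]

lemma run_replicate_succ (q : Q) (a : A) (m : ℕ) :
    run δ q (List.replicate (m + 1) a) = δ (run δ q (List.replicate m a)) a := by
  rw [List.replicate_succ', run_append]; rfl

variable [Fintype Q] {n : ℕ} (hcard : Fintype.card Q ≤ n)
    (hwa : ∀ (q : Q) (u v : List A) (x : A), run δ q (u ++ x :: v) = q → δ q x = q)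

include hcard hwa in
lemma run_replicate_min (q : Q) (a : A) (m : ℕ) :
    run δ q (List.replicate m a) = run δ q (List.replicate (min (n - 1) m) a) := by
  rcases le_or_gt m (n - 1) with hm | hm
  · rw [min_eq_right hm]
  · -- pigeonhole on the orbit
    have hn1 : 1 ≤ n := by
      rcases Nat.eq_zero_or_pos n with rfl | h
      · exact absurd (le_trans (Fintype.card_pos_iff.mpr ⟨q⟩) hcard) (by simp)
      · exact h
    have hninj : ¬ Function.Injective
        (fun i : Fin (n + 1) => run δ q (List.replicate (i : ℕ) a)) := by
      intro hinj
      have := Fintype.card_le_of_injective _ hinj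
      simp at this; omega
    simp only [Function.Injective, not_forall] at hninj
    obtain ⟨i, j, hij, hne⟩ := hninj
    -- wlog i < j
    obtain ⟨i, j, hlt, hij⟩ : ∃ i j : Fin (n + 1), (i : ℕ) < (j : ℕ) ∧
        run δ q (List.replicate (i : ℕ) a) = run δ q (List.replicate (j : ℕ) a) := by
      rcases lt_or_gt_of_ne (fun h => hne (Fin.ext h) : (i : ℕ) ≠ (j : ℕ)) with h | h
      · exact ⟨i, j, h, hij⟩
      · exact ⟨j, i, h, hij.symm⟩
    set p := run δ q (List.replicate (i : ℕ) a) with hp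
    have hfix : δ p a = p := by
      apply hwa p (List.replicate ((j : ℕ) - (i : ℕ) - 1) a) [] a
      have : List.replicate ((j : ℕ) - (i : ℕ) - 1) a ++ a :: [] =
          List.replicate ((j : ℕ) - (i : ℕ)) a := by
        rw [← List.replicate_succ']
        congr 1; omega
      rw [this, ← run_append, ← List.replicate_add]
      have : (i : ℕ) + ((j : ℕ) - (i : ℕ)) = (j : ℕ) := by omega
      rw [this, ← hij]
    -- everything from index i on equals p
    have key : ∀ k, run δ q (List.replicate ((i : ℕ) + k) a) = p := by
      intro k
      induction k with
      | zero => simp [hp]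
      | succ k ih => rw [← Nat.add_assoc, run_replicate_succ, ih, hfix]
    have h1 : run δ q (List.replicate m a) = p := by
      have := key (m - (i : ℕ))
      rwa [show (i : ℕ) + (m - (i : ℕ)) = m by omega] at this
    have h2 : run δ q (List.replicate (n - 1) a) = p := by
      have := key (n - 1 - (i : ℕ))
      rwa [show (i : ℕ) + (n - 1 - (i : ℕ)) = n - 1 by omega] at this
    rw [min_eq_left (le_of_lt hm), h1, h2]

include hcard hwa in
lemma run_blocks (L : List A) (m c : A → ℕ) (hc : ∀ a, c a = min (n - 1) (m a)) :
    ∀ q : Q, run δ q (L.flatMap fun a => List.replicate (m a) a) =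
      run δ q (L.flatMap fun a => List.replicate (c a) a) := by
  induction L with
  | nil => intro q; rfl
  | cons a L ih =>
    intro q
    simp only [List.flatMap_cons, run_append]
    rw [ih, run_replicate_min δ hcard hwa, ← hc]

end Aux

lemma count_flatMap_replicate {A : Type*} [DecidableEq A] (L : List A) (hL : L.Nodup)
    (c : A → ℕ) (a : A) :
    (L.flatMap fun b => List.replicate (c b) b).count a = if a ∈ L then c a else 0 := by
  induction L with
  | nil => simp
  | cons b L ih =>
    simp only [List.flatMap_cons, List.count_append, List.count_replicate,
      ih (List.nodup_cons.mp hL).2, List.mem_cons]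
    rcases List.nodup_cons.mp hL with ⟨hb, _⟩
    by_cases hab : a = b
    · subst hab; simp [hb]
    · simp [hab, Ne.symm hab]

theorem membership_depends_on_threshold_parikh {Q A : Type*} [Fintype Q] [DecidableEq A]
    (n : ℕ) (δ : Q → A → Q) (q0 : Q) (F : Set Q)
    (hcard : Fintype.card Q ≤ n)
    (hcomm : ∀ (q : Q) (a b : A), δ (δ q a) b = δ (δ q b) a)
    (hwa : ∀ (q : Q) (u v : List A) (x : A), run δ q (u ++ x :: v) = q → δ q x = q)
    (u v : List A)
    (h : ∀ a : A, min (n - 1) (u.count a) = min (n - 1) (v.count a)) :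
    run δ q0 u ∈ F ↔ run δ q0 v ∈ F := by
  suffices hrun : run δ q0 u = run δ q0 v by rw [hrun]
  have canon : ∀ w : List A, run δ q0 w =
      run δ q0 (w.dedup.flatMap fun a => List.replicate (min (n - 1) (w.count a)) a) := by
    intro w
    have hperm : w.Perm (w.dedup.flatMap fun a => List.replicate (w.count a) a) := by
      rw [List.perm_iff_count]
      intro a
      rw [count_flatMap_replicate _ w.nodup_dedup]
      by_cases ha : a ∈ w
      · simp [ha, List.mem_dedup]
      · simp [ha, List.mem_dedup, List.count_eq_zero_of_not_mem ha]
    rw [run_perm δ hcomm hperm,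
      run_blocks δ hcard hwa w.dedup (w.count) (fun a => min (n - 1) (w.count a)) (fun _ => rfl)]
  rw [canon u, canon v]
  apply run_perm δ hcomm
  rw [List.perm_iff_count]
  intro a
  rw [count_flatMap_replicate _ u.nodup_dedup, count_flatMap_replicate _ v.nodup_dedup]
  simp only [List.mem_dedup]
  by_cases hu : a ∈ u <;> by_cases hv : a ∈ v
  · simp [hu, hv, h a]
  · have := h a
    rw [List.count_eq_zero_of_not_mem hv] at this
    simp only [Nat.min_zero] at this
    simp [hu, hv, this]
  · have := h a
    rw [List.count_eq_zero_of_not_mem hu] at this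
    simp only [Nat.min_zero] at this
    simp [hu, hv, ← this]
  · simp [hu, hv]
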